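/- Let T ≥ 2 and 1 < j ≤ T. For every x ∈ ℝ^T with |x_{j−1}| < 1/2 and |x_j| < 1/2, there is a neighborhood of x such that for every y in this neighborhood, f̄_T(y) = f̄_T(y_1, …, y_{j−1}, 0, y_{j+1}, …, y_T), i.e., f̄_T does not depend on the j-th coordinate near x. -/
import Mathlib


/-- Ψ(x) = 0 for x ≤ 1/2 and Ψ(x) = exp(1 − 1/(2x−1)²) for x > 1/2. -/
noncomputable def Psi (x : ℝ) : ℝ :=
  if x ≤ 1/2 then 0 else Real.exp (1 - 1/(2*x - 1)^2)

/-- Φ(x) = √e · ∫_{−∞}^x exp(−t²/2) dt. -/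
noncomputable def Phi (x : ℝ) : ℝ :=
  Real.sqrt (Real.exp 1) * ∫ t in Set.Iic x, Real.exp (-t^2/2)

/-- Coordinates of `x : ℝ^T` extended by zero, with 0-based indexing:
`pad T x i` is the paper's `x_{i+1}`. -/
noncomputable def pad (T : ℕ) (x : Fin T → ℝ) (i : ℕ) : ℝ :=
  if h : i < T then x ⟨i, h⟩ else 0

/-- f̄_T(x) = −Ψ(1)Φ(x_1) + Σ_{i=2}^T [Ψ(−x_{i−1})Φ(−x_i) − Ψ(x_{i−1})Φ(x_i)]
(0-based indexing: the sum runs over 0-based indices 1,…,T−1). -/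
noncomputable def fbar (T : ℕ) (x : Fin T → ℝ) : ℝ :=
  -(Psi 1 * Phi (pad T x 0)) +
    ∑ i ∈ Finset.Ico 1 T,
      (Psi (-(pad T x (i-1))) * Phi (-(pad T x i)) - Psi (pad T x (i-1)) * Phi (pad T x i))


lemma Psi_eq_zero {a : ℝ} (h : a ≤ 1/2) : Psi a = 0 := if_pos h

lemma Psi_pm_zero {a : ℝ} (h : |a| < 1/2) : Psi a = 0 ∧ Psi (-a) = 0 := by
  rw [abs_lt] at h
  exact ⟨Psi_eq_zero h.2.le, Psi_eq_zero (by linarith [h.1])⟩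

lemma pad_update_ne {T j k : ℕ} (hj : j < T) (y : Fin T → ℝ) (hk : k ≠ j) :
    pad T (Function.update y ⟨j, hj⟩ 0) k = pad T y k := by
  unfold pad
  split
  · rw [Function.update_of_ne]
    simpa [Fin.ext_iff] using hk
  · rfl

lemma pad_update_self {T j : ℕ} (hj : j < T) (y : Fin T → ℝ) :
    pad T (Function.update y ⟨j, hj⟩ 0) j = 0 := by
  simp [pad, hj]

/-- If (in 0-based indexing, with `1 ≤ j < T`, i.e. 1-based `1 < j+1 ≤ T`) both
`|x_{j-1}| < 1/2` and `|x_j| < 1/2`, then near `x` the function f̄_T does not depend on the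
`j`-th coordinate: f̄_T(y) = f̄_T(y with coordinate j set to 0) for all y near x. -/
theorem stmt8 (T : ℕ) (hT : 2 ≤ T) (j : ℕ) (hj1 : 1 ≤ j) (hjT : j < T)
    (x : Fin T → ℝ)
    (h1 : |pad T x (j-1)| < 1/2) (h2 : |pad T x j| < 1/2) :
    ∀ᶠ y in nhds x, fbar T y = fbar T (Function.update y ⟨j, hjT⟩ 0) := by
  have hj1T : j - 1 < T := lt_of_le_of_lt (Nat.sub_le j 1) hjT
  have hp1 : pad T x (j-1) = x ⟨j-1, hj1T⟩ := dif_pos hj1T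
  have hp2 : pad T x j = x ⟨j, hjT⟩ := dif_pos hjT
  have c1 : ContinuousAt (fun y : Fin T → ℝ => |y ⟨j-1, hj1T⟩|) x :=
    ((continuous_apply _).abs).continuousAt
  have c2 : ContinuousAt (fun y : Fin T → ℝ => |y ⟨j, hjT⟩|) x :=
    ((continuous_apply _).abs).continuousAt
  have e1 : ∀ᶠ y in nhds x, |y ⟨j-1, hj1T⟩| < 1/2 :=
    c1.eventually_lt continuousAt_const (by rw [← hp1]; exact h1)
  have e2 : ∀ᶠ y in nhds x, |y ⟨j, hjT⟩| < 1/2 :=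
    c2.eventually_lt continuousAt_const (by rw [← hp2]; exact h2)
  filter_upwards [e1, e2] with y hy1 hy2
  set z := Function.update y ⟨j, hjT⟩ 0 with hz
  have hpy1 : pad T y (j-1) = y ⟨j-1, hj1T⟩ := dif_pos hj1T
  have hpy2 : pad T y j = y ⟨j, hjT⟩ := dif_pos hjT
  have hy1' : |pad T y (j-1)| < 1/2 := by rw [hpy1]; exact hy1
  have hy2' : |pad T y j| < 1/2 := by rw [hpy2]; exact hy2
  unfold fbar
  congr 1
  · have : pad T z 0 = pad T y 0 := pad_update_ne hjT y (by omega)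
    rw [this]
  · apply Finset.sum_congr rfl
    intro i hi
    rw [Finset.mem_Ico] at hi
    rcases eq_or_ne i j with hij | hij
    · rw [hij]
      -- term i = j : Psi(±pad (j-1)) = 0 on both sides
      have hz1 : pad T z (j-1) = pad T y (j-1) := pad_update_ne hjT y (by omega)
      obtain ⟨hA, hB⟩ := Psi_pm_zero hy1'
      rw [hz1, hA, hB]; ring
    · rcases eq_or_ne i (j+1) with hij1 | hij1
      · rw [hij1]
        -- term i = j+1 : Psi(±pad j) = 0 on both sides
        have hiz : j + 1 - 1 = j := by omega
        rw [hiz]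
        obtain ⟨hA, hB⟩ := Psi_pm_zero hy2'
        have hz2 : pad T z j = 0 := pad_update_self hjT y
        have hzi : pad T z (j+1) = pad T y (j+1) := pad_update_ne hjT y (by omega)
        rw [hz2, hA, hB, neg_zero]
        obtain ⟨hA', hB'⟩ := Psi_pm_zero (a := (0:ℝ)) (by norm_num)
        rw [hA']; ring
      · have hz1 : pad T z (i-1) = pad T y (i-1) := pad_update_ne hjT y (by omega)
        have hz2 : pad T z i = pad T y i := pad_update_ne hjT y hij
        rw [hz1, hz2]
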